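/- arXiv:0912.2981 — 2 statements merged into one kernel-verified Lean document; each statement's English description precedes it below -/
import Mathlib

section
/- The field ℚ(cot(π/5)) is a Galois extension of ℚ of degree 4 whose Galois group is cyclic (of order 4). -/
/-!
Since `cot (π / 5) = (tan (π / 5))⁻¹`, the field is `ℚ(t)` with `t = tan (π / 5)`, a root of
`X ⁴ - 10 X ² + 5`, which is Eisenstein at `5`; hence `[ℚ(t) : ℚ] = 4`. The double-angle map
`t ↦ 2t / (1 - t²)` sends `tan θ` to `tan 2θ`, so it permutes the roots `tan (kπ / 5)` as `k ↦ 2k`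
on `(ℤ/5ℤ)ˣ`. It therefore induces an automorphism `σ` of `ℚ(t)` with `σ² t = -t`, of order
`4 = [ℚ(t) : ℚ]`; so `ℚ(t)/ℚ` is Galois with cyclic group generated by `σ`.
-/

open Polynomial IntermediateField Real

theorem Real.tan_pi_div_five_quartic :
    tan (π / 5) ^ 4 - 10 * tan (π / 5) ^ 2 + 5 = 0 := by
  have hcos : cos (π / 5) ≠ 0 :=
    (cos_pos_of_mem_Ioo ⟨by linarith [pi_pos], by linarith [pi_pos]⟩).ne'
  have hpyth := sin_sq_add_cos_sq (π / 5)
  have hquad : 4 * cos (π / 5) ^ 2 - 2 * cos (π / 5) - 1 = 0 := quadratic_root_cos_pi_div_five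
  rw [tan_eq_sin_div_cos]
  field_simp
  linear_combination (sin (π / 5) ^ 2 - 11 * cos (π / 5) ^ 2 + 1) * hpyth
    + (4 * cos (π / 5) ^ 2 + 2 * cos (π / 5) - 1) * hquad

noncomputable def tanQuartic (R : Type*) [CommRing R] : R[X] := X ^ 4 - 10 * X ^ 2 + 5

section

variable (R : Type*) [CommRing R]

theorem monic_tanQuartic [Nontrivial R] : (tanQuartic R).Monic := by
  unfold tanQuartic; monicity!

theorem natDegree_tanQuartic [Nontrivial R] : (tanQuartic R).natDegree = 4 := by
  unfold tanQuartic; compute_degree!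

@[simp]
theorem aeval_tanQuartic {A : Type*} [CommRing A] [Algebra R A] (t : A) :
    aeval t (tanQuartic R) = t ^ 4 - 10 * t ^ 2 + 5 := by
  simp [tanQuartic, map_ofNat]

theorem map_tanQuartic {S : Type*} [CommRing S] (f : R →+* S) :
    (tanQuartic R).map f = tanQuartic S := by
  simp [tanQuartic]

end

theorem tanQuartic_isEisensteinAt_five : (tanQuartic ℤ).IsEisensteinAt (Ideal.span {5}) := by
  refine ⟨?_, fun {n} hn ↦ ?_, ?_⟩
  · rw [(monic_tanQuartic ℤ).leadingCoeff, Ideal.mem_span_singleton]; norm_num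
  · rw [natDegree_tanQuartic] at hn
    interval_cases n <;> simp [tanQuartic, coeff_X_pow, Ideal.mem_span_singleton]
  · rw [Ideal.span_singleton_pow, Ideal.mem_span_singleton]
    simp [tanQuartic, coeff_X_pow]

theorem irreducible_tanQuartic : Irreducible (tanQuartic ℚ) := by
  have hZ : Irreducible (tanQuartic ℤ) :=
    tanQuartic_isEisensteinAt_five.irreducible
      (Ideal.span_singleton_prime (by norm_num) |>.mpr (by norm_num))
      (monic_tanQuartic ℤ).isPrimitive (by rw [natDegree_tanQuartic]; norm_num)
  simpa [map_tanQuartic] using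
    ((monic_tanQuartic ℤ).irreducible_iff_irreducible_map_fraction_map (K := ℚ)).mp hZ

theorem minpoly_eq_tanQuartic {L : Type*} [Field L] [Algebra ℚ L] {t : L}
    (ht : t ^ 4 - 10 * t ^ 2 + 5 = 0) : minpoly ℚ t = tanQuartic ℚ :=
  (minpoly.eq_of_irreducible_of_monic irreducible_tanQuartic (by simpa using ht)
    (monic_tanQuartic ℚ)).symm

section DoubleAngle

variable {K : Type*} [Field K]

def tanDouble (t : K) : K := 2 * t / (1 - t ^ 2)

theorem map_tanDouble {L G : Type*} [Field L] [FunLike G K L] [RingHomClass G K L] (f : G)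
    (t : K) : f (tanDouble t) = tanDouble (f t) := by
  simp [tanDouble, map_div₀, map_ofNat]

variable [CharZero K] {t : K}

theorem ne_zero_of_tanQuartic (ht : t ^ 4 - 10 * t ^ 2 + 5 = 0) : t ≠ 0 := by
  rintro rfl; norm_num at ht

theorem one_sub_sq_ne_zero_of_tanQuartic (ht : t ^ 4 - 10 * t ^ 2 + 5 = 0) : 1 - t ^ 2 ≠ 0 := by
  intro h
  have : t ^ 2 = 1 := by linear_combination -h
  rw [show t ^ 4 = (t ^ 2) ^ 2 by ring, this] at ht
  norm_num at ht

theorem tanDouble_tanQuartic (ht : t ^ 4 - 10 * t ^ 2 + 5 = 0) :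
    tanDouble t ^ 4 - 10 * tanDouble t ^ 2 + 5 = 0 := by
  have := one_sub_sq_ne_zero_of_tanQuartic ht
  rw [tanDouble]
  field_simp
  linear_combination (5 * t ^ 4 - 10 * t ^ 2 + 1) * ht

theorem tanDouble_tanDouble (ht : t ^ 4 - 10 * t ^ 2 + 5 = 0) : tanDouble (tanDouble t) = -t := by
  have h1 := one_sub_sq_ne_zero_of_tanQuartic ht
  have h2 := one_sub_sq_ne_zero_of_tanQuartic (tanDouble_tanQuartic ht)
  rw [tanDouble, div_eq_iff h2]
  unfold tanDouble
  field_simp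
  linear_combination t * ht

end DoubleAngle

section Galois

variable {F E : Type*} [Field F] [Field E] [Algebra F E]

theorem IntermediateField.adjoin_simple_inv (α : E) : F⟮α⁻¹⟯ = F⟮α⟯ :=
  le_antisymm (adjoin_simple_le_iff.mpr (inv_mem (mem_adjoin_simple_self F α)))
    (adjoin_simple_le_iff.mpr (by simpa using inv_mem (mem_adjoin_simple_self F α⁻¹)))

theorem IntermediateField.exists_algEquiv_adjoin_simple_gen_eq {α : E} (hα : IsIntegral F α)
    {β : F⟮α⟯} (hβ : aeval β (minpoly F α) = 0) :
    ∃ σ : F⟮α⟯ ≃ₐ[F] F⟮α⟯, σ (AdjoinSimple.gen F α) = β := by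
  have := adjoin.finiteDimensional hα
  let φ := (algHomAdjoinIntegralEquiv F hα).symm ⟨β, mem_aroots.mpr ⟨minpoly.ne_zero hα, hβ⟩⟩
  exact ⟨AlgEquiv.ofBijective φ φ.bijective, algHomAdjoinIntegralEquiv_symm_apply_gen F hα _⟩

theorem IntermediateField.orderOf_eq_four_of_apply_apply_gen_eq_neg [CharZero E] {α : E}
    (hα : α ≠ 0) (σ : F⟮α⟯ ≃ₐ[F] F⟮α⟯)
    (hσ : σ (σ (AdjoinSimple.gen F α)) = -AdjoinSimple.gen F α) : orderOf σ = 4 := by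
  have hsq : (σ ^ 2) (AdjoinSimple.gen F α) = -AdjoinSimple.gen F α := hσ
  have hsq_ne : σ ^ 2 ≠ 1 := fun h ↦ by
    rw [h, AlgEquiv.one_apply] at hsq
    exact hα (CharZero.eq_neg_self_iff.mp (congrArg Subtype.val hsq))
  have hpow_four : σ ^ 4 = 1 := by
    refine AlgEquiv.coe_toAlgHom_injective (adjoin_algHom_ext F fun x hx ↦ ?_)
    obtain rfl : x = α := hx
    change (σ ^ 2 * σ ^ 2) (AdjoinSimple.gen F x) = AdjoinSimple.gen F x
    rw [AlgEquiv.mul_apply, hsq, map_neg, hsq, neg_neg]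
  exact orderOf_eq_prime_pow (p := 2) (n := 1) hsq_ne hpow_four

theorem isGalois_and_isCyclic_of_orderOf_eq_finrank [FiniteDimensional F E] (σ : E ≃ₐ[F] E)
    (hσ : orderOf σ = Module.finrank F E) : IsGalois F E ∧ IsCyclic (E ≃ₐ[F] E) := by
  have hcard : Nat.card (E ≃ₐ[F] E) = Module.finrank F E := by
    refine le_antisymm ?_ (hσ ▸ orderOf_le_card)
    exact (Nat.card_congr (algEquivEquivAlgHom F E)).trans_le (card_algHom_le_finrank F E E)
  exact ⟨IsGalois.of_card_aut_eq_finrank F E hcard,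
    isCyclic_of_orderOf_eq_card σ (hσ.trans hcard.symm)⟩

end Galois

theorem isGalois_and_finrank_eq_four_and_isCyclic_of_tanQuartic {L : Type*} [Field L]
    [CharZero L] {t : L} (ht : t ^ 4 - 10 * t ^ 2 + 5 = 0) :
    IsGalois ℚ ℚ⟮t⟯ ∧ Module.finrank ℚ ℚ⟮t⟯ = 4 ∧ IsCyclic (ℚ⟮t⟯ ≃ₐ[ℚ] ℚ⟮t⟯) := by
  have hint : IsIntegral ℚ t := ⟨tanQuartic ℚ, monic_tanQuartic ℚ, by simpa [← aeval_def] using ht⟩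
  have := adjoin.finiteDimensional hint
  have hrank : Module.finrank ℚ ℚ⟮t⟯ = 4 := by
    rw [adjoin.finrank hint, minpoly_eq_tanQuartic ht, natDegree_tanQuartic]
  set a := AdjoinSimple.gen ℚ t
  have ha : a ^ 4 - 10 * a ^ 2 + 5 = 0 := Subtype.ext ht
  obtain ⟨σ, hσ⟩ := exists_algEquiv_adjoin_simple_gen_eq hint (β := tanDouble a)
    (by rw [minpoly_eq_tanQuartic ht, aeval_tanQuartic]; exact tanDouble_tanQuartic ha)
  have hσσ : σ (σ a) = -a := by rw [hσ, map_tanDouble, hσ, tanDouble_tanDouble ha]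
  have hord : orderOf σ = Module.finrank ℚ ℚ⟮t⟯ := by
    rw [orderOf_eq_four_of_apply_apply_gen_eq_neg (ne_zero_of_tanQuartic ht) σ hσσ, hrank]
  obtain ⟨hgal, hcyc⟩ := isGalois_and_isCyclic_of_orderOf_eq_finrank σ hord
  exact ⟨hgal, hrank, hcyc⟩

/-- `ℚ(cot (π / 5))` is a Galois extension of `ℚ` of degree `4` with cyclic
Galois group. -/
theorem adjoin_cot_pi_div_five_cyclic_degree_four :
    letI E : IntermediateField ℚ ℝ :=
      IntermediateField.adjoin ℚ {Real.cot (Real.pi / 5)}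
    IsGalois ℚ E ∧ Module.finrank ℚ E = 4 ∧ IsCyclic (E ≃ₐ[ℚ] E) := by
  rw [← tan_inv_eq_cot, adjoin_simple_inv]
  exact isGalois_and_finrank_eq_four_and_isCyclic_of_tanQuartic tan_pi_div_five_quartic
end

section
/- Let n ≥ 5 be an integer with n ≠ 6, and suppose the field Ω = ℚ(cot(π/n)) is flat, i.e. for every subfield E of Ω containing ℚ, every field automorphism σ of E satisfies σ ∘ σ = id. Then n ∈ {8, 12, 24}. -/
/-!
If `m ∣ n` then `cot (π / m)` and `cos (2π / m)` are rational functions of `cot (π / n)`, so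
`ℚ(cot (π / n))` contains `ℚ(cot (π / 5))` when `5 ∣ n` and `ℚ(cos (2π / m))` when `m ∣ n`.
The first field is cyclic of degree 4, and `cos θ ↦ cos (a θ)` is an automorphism of the second
whose square moves `cos θ` as soon as `a² ≢ ±1 (mod m)`, which happens for `m = 9` (`a = 2`),
`m = 16` (`a = 3`) and every prime `m ≥ 7` (`a = 2`). So flatness forces `n ∣ 24`.

The automorphisms are obtained by sending a generator `u` to a conjugate `v`. Conjugacy is seen
in a cyclotomic field: `u` and `v` are the same rational function of a primitive root of unity
`η` and of `η ^ a`, which are conjugate because cyclotomic polynomials are irreducible over `ℚ`.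
-/

open Polynomial IntermediateField

section FieldTheory

variable {F L : Type*} [Field F] [Field L] [Algebra F L]

theorem exists_algHom_adjoin_simple_gen_eq {K : Type*} [Field K] [Algebra F K] {α : L}
    (hα : IsIntegral F α) {β : K} (hβ : aeval β (minpoly F α) = 0) :
    ∃ g : F⟮α⟯ →ₐ[F] K, g (AdjoinSimple.gen F α) = β :=
  ⟨_, algHomAdjoinIntegralEquiv_symm_apply_gen F hα ⟨β, mem_aroots.mpr ⟨minpoly.ne_zero hα, hβ⟩⟩⟩

theorem exists_algEquiv_adjoin_simple_gen_eq {u : L} (hu : IsIntegral F u) {y : F⟮u⟯}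
    (hy : aeval y (minpoly F u) = 0) :
    ∃ σ : F⟮u⟯ ≃ₐ[F] F⟮u⟯, σ (AdjoinSimple.gen F u) = y := by
  have := adjoin.finiteDimensional hu
  obtain ⟨ψ, hψ⟩ := exists_algHom_adjoin_simple_gen_eq hu hy
  exact ⟨AlgEquiv.ofBijective ψ ψ.bijective, hψ⟩

theorem exists_ringEquiv_adjoin_simple_apply_apply_ne {u v : L} (hu : IsIntegral F u)
    (hv : aeval v (minpoly F u) = 0) (p q : F[X]) (hvu : v = aeval u p / aeval u q)
    (hne : aeval v p / aeval v q ≠ u) :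
    ∃ σ : F⟮u⟯ ≃+* F⟮u⟯, ∃ x, σ (σ x) ≠ x := by
  set x := AdjoinSimple.gen F u
  set y : F⟮u⟯ := aeval x p / aeval x q
  have hy : (y : L) = v := by simp [y, x, hvu]
  obtain ⟨σ, hσ⟩ := exists_algEquiv_adjoin_simple_gen_eq hu (y := y)
    (Subtype.ext (by rw [← aeval_coe, hy, hv]; rfl))
  refine ⟨σ.toRingEquiv, x, fun h => hne ?_⟩
  have hσy : σ (σ x) = aeval y p / aeval y q := by
    rw [hσ]
    simp only [y, map_div₀, ← aeval_algHom_apply]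
    rw [hσ]
  calc aeval v p / aeval v q = ((σ (σ x) : F⟮u⟯) : L) := by
        rw [hσy, ← hy, aeval_coe, aeval_coe]; rfl
    _ = u := congrArg Subtype.val h

theorem isIntegral_and_minpoly_eq_of_aeval_eq_div {M : Type*} [Field M] [Algebra F M]
    [Algebra L M] [IsScalarTower F L M] {α β : M} (hα : IsIntegral F α)
    (hβ : aeval β (minpoly F α) = 0) (p q : F[X]) {u v : L}
    (hu : algebraMap L M u = aeval α p / aeval α q)
    (hv : algebraMap L M v = aeval β p / aeval β q) :
    IsIntegral F u ∧ minpoly F v = minpoly F u := by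
  have := adjoin.finiteDimensional hα
  obtain ⟨g, hg⟩ := exists_algHom_adjoin_simple_gen_eq hα hβ
  set x := AdjoinSimple.gen F α
  set U : F⟮α⟯ := aeval x p / aeval x q
  have hUu : (U : M) = algebraMap L M u := by simp [U, x, hu]
  have hUv : g U = algebraMap L M v := by
    simp only [U, map_div₀, ← aeval_algHom_apply, hg, x, hv]
  have hinj := (algebraMap L M).injective
  refine ⟨?_, ?_⟩
  · rw [← isIntegral_algebraMap_iff hinj, ← hUu]
    exact (IsIntegral.of_finite F U).map (IsScalarTower.toAlgHom F F⟮α⟯ M)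
  · rw [← minpoly.algebraMap_eq hinj, ← hUv, minpoly.algHom_eq g g.injective,
      ← minpoly.algebraMap_eq hinj u, ← hUu]
    exact (minpoly.algebraMap_eq (algebraMap F⟮α⟯ M).injective U).symm

end FieldTheory

theorem IsPrimitiveRoot.aeval_pow_minpoly_rat {K : Type*} [Field K] [CharZero K]
    {η : K} {m a : ℕ} (hη : IsPrimitiveRoot η m) (hm : 0 < m) (ha : a.Coprime m) :
    aeval (η ^ a) (minpoly ℚ η) = 0 := by
  rw [← cyclotomic_eq_minpoly_rat hη hm, cyclotomic_eq_minpoly_rat (hη.pow_of_coprime a ha) hm]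
  exact minpoly.aeval _ _

namespace Real

theorem cot_add {a b : ℝ} (ha : sin a ≠ 0) (hb : sin b ≠ 0) :
    cot (a + b) = (cot a * cot b - 1) / (cot a + cot b) := by
  simp only [cot_eq_cos_div_sin, cos_add, sin_add]
  field_simp
  ring

theorem cot_two_mul {x : ℝ} (hx : sin x ≠ 0) : cot (2 * x) = (cot x ^ 2 - 1) / (2 * cot x) := by
  rw [two_mul, cot_add hx hx]
  ring

theorem cos_two_mul_eq_cot {x : ℝ} (hx : sin x ≠ 0) :
    cos (2 * x) = (cot x ^ 2 - 1) / (cot x ^ 2 + 1) := by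
  rw [cot_eq_cos_div_sin, cos_two_mul']
  field_simp
  linear_combination (cos x ^ 2 - sin x ^ 2) * sin_sq_add_cos_sq x

theorem cot_pi_sub (x : ℝ) : cot (π - x) = -cot x := by
  simp only [cot_eq_cos_div_sin, cos_pi_sub, sin_pi_sub, neg_div]

theorem cot_nat_mul_mem_adjoin_cot (x : ℝ) (k : ℕ)
    (hsin : ∀ j : ℕ, 1 ≤ j → j < k → sin (j * x) ≠ 0) : cot (k * x) ∈ ℚ⟮cot x⟯ := by
  induction k with
  | zero => simp [cot_eq_cos_div_sin]
  | succ k ih =>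
    have hx : cot x ∈ ℚ⟮cot x⟯ := mem_adjoin_simple_self ℚ _
    rcases Nat.eq_zero_or_pos k with rfl | hk
    · simpa using hx
    have hk' := ih fun j h1 h2 => hsin j h1 (by omega)
    have h1 := hsin 1 le_rfl (by omega)
    rw [Nat.cast_one, one_mul] at h1
    push_cast
    rw [add_mul, one_mul, cot_add (hsin k hk (by omega)) h1]
    exact div_mem (sub_mem (mul_mem hk' hx) (one_mem _)) (add_mem hk' hx)

theorem sin_nat_mul_pi_div_ne_zero {j n : ℕ} (hj : 0 < j) (hjn : j < n) :
    sin (j * (π / n)) ≠ 0 := by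
  have hn : (0 : ℝ) < n := by exact_mod_cast hj.trans hjn
  have hjn' : (j : ℝ) < n := by exact_mod_cast hjn
  refine (sin_pos_of_pos_of_lt_pi (by positivity) ?_).ne'
  rw [← mul_div_assoc, div_lt_iff₀ hn]
  exact (mul_lt_mul_of_pos_right hjn' pi_pos).trans_eq (mul_comm _ _)

theorem cot_pi_div_mem_adjoin_cot {m n : ℕ} (hm : 2 ≤ m) (hn : 0 < n) (hmn : m ∣ n) :
    cot (π / m) ∈ ℚ⟮cot (π / n)⟯ := by
  obtain ⟨k, rfl⟩ := hmn
  have hk : 0 < k := Nat.pos_of_mul_pos_left hn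
  have hkn : k < m * k := lt_mul_left hk (by omega)
  have h : π / m = k * (π / (m * k : ℕ)) := by
    have : (k : ℝ) ≠ 0 := by positivity
    push_cast; field_simp
  rw [h]
  exact cot_nat_mul_mem_adjoin_cot _ k fun j hj hjk => sin_nat_mul_pi_div_ne_zero hj (by omega)

theorem cos_two_pi_div_mem_adjoin_cot {m n : ℕ} (hm : 2 ≤ m) (hn : 0 < n) (hmn : m ∣ n) :
    cos (2 * π / m) ∈ ℚ⟮cot (π / n)⟯ := by
  have hsin : sin (π / m) ≠ 0 := by
    simpa using sin_nat_mul_pi_div_ne_zero (j := 1) Nat.one_pos (by omega : 1 < m)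
  have hc := cot_pi_div_mem_adjoin_cot hm hn hmn
  rw [mul_div_assoc, cos_two_mul_eq_cot hsin]
  exact div_mem (sub_mem (pow_mem hc 2) (one_mem _)) (add_mem (pow_mem hc 2) (one_mem _))

theorem cos_nat_mul_two_pi_div_ne {m k : ℕ} (hm : 0 < m) (h₁ : ¬ (m : ℤ) ∣ k - 1)
    (h₂ : ¬ (m : ℤ) ∣ k + 1) : cos (k * (2 * π / m)) ≠ cos (2 * π / m) := by
  rw [Ne, cos_eq_cos_iff]
  have hm' : (m : ℝ) ≠ 0 := by positivity
  rintro ⟨l, hl | hl⟩ <;> field_simp at hl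
  · have : ((k - 1 : ℤ) : ℝ) = ((m * -l : ℤ) : ℝ) := by push_cast; linarith
    exact h₁ ⟨-l, by exact_mod_cast this⟩
  · have : ((k + 1 : ℤ) : ℝ) = ((m * l : ℤ) : ℝ) := by push_cast; linarith
    exact h₂ ⟨l, by exact_mod_cast this⟩

end Real

open Real

theorem Complex.ofReal_cos_eq_exp (x : ℝ) :
    (Real.cos x : ℂ) = (exp (x * I) ^ 2 + 1) / (2 * exp (x * I)) := by
  rw [ofReal_cos, cos, neg_mul, exp_neg]
  field_simp

theorem exists_ringEquiv_adjoin_cos_two_pi_div {m a : ℕ} (hm : 0 < m) (ha : a.Coprime m)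
    (h₁ : ¬ (m : ℤ) ∣ a ^ 2 - 1) (h₂ : ¬ (m : ℤ) ∣ a ^ 2 + 1) :
    ∃ σ : ℚ⟮cos (2 * π / m)⟯ ≃+* ℚ⟮cos (2 * π / m)⟯, ∃ x, σ (σ x) ≠ x := by
  set θ := 2 * π / m
  set η : ℂ := Complex.exp (2 * π * Complex.I / m)
  have hη : IsPrimitiveRoot η m := Complex.isPrimitiveRoot_exp m hm.ne'
  have hcos : ∀ k : ℕ, algebraMap ℝ ℂ (cos (k * θ)) =
      aeval (η ^ k) (X ^ 2 + 1 : ℚ[X]) / aeval (η ^ k) (2 * X : ℚ[X]) := by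
    intro k
    have hpow : Complex.exp (↑(k * θ) * Complex.I) = η ^ k := by
      rw [← Complex.exp_nat_mul]
      congr 1
      simp only [θ]
      push_cast
      ring
    rw [Complex.coe_algebraMap, Complex.ofReal_cos_eq_exp, hpow]
    simp only [map_add, map_mul, map_pow, aeval_X, map_one, map_ofNat]
  have hu := hcos 1
  rw [Nat.cast_one, one_mul, pow_one] at hu
  obtain ⟨hint, hmin⟩ := isIntegral_and_minpoly_eq_of_aeval_eq_div (u := cos θ)
    (v := cos (a * θ)) (hη.isIntegral hm).tower_top (hη.aeval_pow_minpoly_rat hm ha) _ _ hu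
    (hcos a)
  refine exists_ringEquiv_adjoin_simple_apply_apply_ne hint
    (by rw [← hmin]; exact minpoly.aeval _ _) (Chebyshev.T ℚ a) 1 ?_ ?_
  · simp [Chebyshev.aeval_T]
  · rw [Chebyshev.aeval_T, map_one, div_one, Chebyshev.T_real_cos, Int.cast_natCast,
      ← mul_assoc, ← sq]
    exact_mod_cast cos_nat_mul_two_pi_div_ne hm (k := a ^ 2) (mod_cast h₁) (mod_cast h₂)

theorem exists_ringEquiv_adjoin_cot_pi_div_five :
    ∃ σ : ℚ⟮cot (π / 5)⟯ ≃+* ℚ⟮cot (π / 5)⟯, ∃ x, σ (σ x) ≠ x := by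
  set η : ℂ := Complex.exp (2 * π * Complex.I / (20 : ℕ))
  have hη : IsPrimitiveRoot η 20 := Complex.isPrimitiveRoot_exp 20 (by norm_num)
  have hpow : ∀ k : ℕ, η ^ k = Complex.exp (2 * π * Complex.I * (k / 20)) := by
    intro k
    rw [← Complex.exp_nat_mul]
    congr 1
    push_cast
    ring
  have hpow_add : ∀ k j : ℕ, η ^ (k + 20 * j) = η ^ k := by
    intro k j
    rw [pow_add, pow_mul, hη.pow_eq_one, one_pow, mul_one]
  have hI : η ^ 5 = Complex.I := by
    rw [hpow]
    conv_rhs => rw [← Complex.exp_pi_div_two_mul_I]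
    congr 1
    push_cast
    ring
  -- Applied to `(t, ζ) = (1/5, η)` and `(2/5, η ^ 17)`, this writes `cot (π / 5)` and
  -- `cot (2π / 5)` as the same rational function of two conjugate primitive 20th roots of unity.
  have hcot : ∀ (t : ℝ) (ζ : ℂ), ζ ^ 4 = Complex.exp (2 * π * Complex.I * t) →
      ζ ^ 5 = Complex.I → algebraMap ℝ ℂ (cot (π * t)) =
        aeval ζ (X ^ 4 + 1 : ℚ[X]) / aeval ζ (X ^ 5 * (1 - X ^ 4) : ℚ[X]) := by
    intro t ζ h4 h5
    rw [Complex.coe_algebraMap, Complex.ofReal_cot, Complex.ofReal_mul,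
      Complex.cot_pi_eq_exp_ratio, ← h4, ← h5]
    simp only [map_add, map_mul, map_sub, map_pow, aeval_X, map_one]
  have hu := hcot (1 / 5) η (by rw [hpow]; push_cast; ring_nf) hI
  have hv := hcot (2 / 5) (η ^ 17)
    (by rw [← pow_mul, hpow_add 8 3, hpow]; push_cast; ring_nf)
    (by rw [← pow_mul, hpow_add 5 4, hI])
  obtain ⟨hint, hmin⟩ := isIntegral_and_minpoly_eq_of_aeval_eq_div (u := cot (π * (1 / 5)))
    (v := cot (π * (2 / 5))) (hη.isIntegral (by norm_num)).tower_top
    (hη.aeval_pow_minpoly_rat (a := 17) (by norm_num) (by norm_num)) _ _ hu hv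
  have hsin : ∀ t : ℝ, 0 < t → t < 1 → sin (π * t) ≠ 0 := fun t h0 h1 =>
    (sin_pos_of_pos_of_lt_pi (by positivity) (by nlinarith [pi_pos])).ne'
  have hpos : 0 < cot (π * (1 / 5)) := by
    rw [cot_eq_cos_div_sin]
    exact div_pos (cos_pos_of_mem_Ioo ⟨by linarith [pi_pos], by linarith [pi_pos]⟩)
      (sin_pos_of_pos_of_lt_pi (by positivity) (by linarith [pi_pos]))
  rw [show π / 5 = π * (1 / 5) by ring]
  refine exists_ringEquiv_adjoin_simple_apply_apply_ne hint
    (by rw [← hmin]; exact minpoly.aeval _ _) (X ^ 2 - 1) (2 * X) ?_ ?_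
  · simp only [map_sub, map_mul, map_pow, aeval_X, map_one, map_ofNat]
    rw [← cot_two_mul (hsin _ (by norm_num) (by norm_num))]
    ring_nf
  · simp only [map_sub, map_mul, map_pow, aeval_X, map_one, map_ofNat]
    rw [← cot_two_mul (hsin _ (by norm_num) (by norm_num)),
      show 2 * (π * (2 / 5)) = π - π * (1 / 5) by ring, cot_pi_sub]
    linarith

theorem Nat.dvd_twenty_four_of_prime_dvd_le_three {n : ℕ} (h9 : ¬ 9 ∣ n) (h16 : ¬ 16 ∣ n)
    (hp : ∀ p, p.Prime → p ∣ n → p ≤ 3) : n ∣ 24 := by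
  rw [Nat.dvd_iff_prime_pow_dvd_dvd 24 n]
  intro p k hp' hpk
  rcases k.eq_zero_or_pos with rfl | hk
  · simp
  have hp3 := hp p hp' ((dvd_pow_self p hk.ne').trans hpk)
  have hp2 := hp'.two_le
  interval_cases p
  · have hk3 : k ≤ 3 := by
      by_contra h
      exact h16 ((pow_dvd_pow 2 (by omega : 4 ≤ k)).trans hpk)
    exact (pow_dvd_pow 2 hk3).trans (by norm_num)
  · have hk1 : k ≤ 1 := by
      by_contra h
      exact h9 ((pow_dvd_pow 3 (by omega : 2 ≤ k)).trans hpk)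
    exact (pow_dvd_pow 3 hk1).trans (by norm_num)

/-- If `n ≥ 5`, `n ≠ 6`, and `Ω = ℚ(cot (π / n))` is flat (every field
automorphism of every subfield of `Ω` containing `ℚ` squares to the identity),
then `n ∈ {8, 12, 24}`. -/
theorem flat_cot_field_imp (n : ℕ) (hn : 5 ≤ n) (hn6 : n ≠ 6)
    (hflat : ∀ E : IntermediateField ℚ ℝ,
      E ≤ IntermediateField.adjoin ℚ {Real.cot (Real.pi / (n : ℝ))} →
        ∀ σ : E ≃+* E, ∀ x : E, σ (σ x) = x) :
    n = 8 ∨ n = 12 ∨ n = 24 := by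
  have hn0 : 0 < n := by omega
  have hsub : ∀ u ∈ ℚ⟮cot (π / n)⟯, ¬ ∃ σ : ℚ⟮u⟯ ≃+* ℚ⟮u⟯, ∃ x, σ (σ x) ≠ x :=
    fun u hu ⟨σ, x, hx⟩ => hx (hflat _ (adjoin_simple_le_iff.mpr hu) σ x)
  have hcos : ∀ m a : ℕ, 2 ≤ m → m ∣ n → a.Coprime m → ¬ (m : ℤ) ∣ a ^ 2 - 1 →
      ¬ (m : ℤ) ∣ a ^ 2 + 1 → False := fun m a hm hmn ha h₁ h₂ =>
    hsub _ (cos_two_pi_div_mem_adjoin_cot hm hn0 hmn)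
      (exists_ringEquiv_adjoin_cos_two_pi_div (by omega) ha h₁ h₂)
  have h9 : ¬ 9 ∣ n := fun h => hcos 9 2 (by norm_num) h (by norm_num) (by norm_num) (by norm_num)
  have h16 : ¬ 16 ∣ n := fun h => hcos 16 3 (by norm_num) h (by norm_num) (by norm_num) (by norm_num)
  have hp : ∀ p, p.Prime → p ∣ n → p ≤ 3 := by
    intro p hp hpn
    by_contra hp3
    rcases Nat.lt_or_ge p 7 with hp7 | hp7
    · interval_cases p <;> norm_num at hp
      exact hsub _ (by exact_mod_cast cot_pi_div_mem_adjoin_cot (by norm_num) hn0 hpn)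
        exists_ringEquiv_adjoin_cot_pi_div_five
    · refine hcos p 2 (by omega) hpn ((Nat.coprime_primes Nat.prime_two hp).mpr (by omega)) ?_ ?_
      all_goals exact fun h => by have := Int.le_of_dvd (by norm_num) h; omega
  have h24 := Nat.dvd_twenty_four_of_prime_dvd_le_three h9 h16 hp
  have := Nat.le_of_dvd (by norm_num) h24
  interval_cases n <;> omega
end
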